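/- Let N, n_x, n_u be natural numbers and set n = N(n_x+n_u) + n_x and p = (N+1)n_x. For each stage j < N let A_j ∈ ℝ^{n_x×n_x} and B_j ∈ ℝ^{n_x×n_u}. Let M ∈ ℝ^{p×n} be the block matrix whose 0-th block row is (I_{n_x}, 0, …, 0) and whose (j+1)-th block row (for j < N) has −A_j in the x^j columns, −B_j in the u^j columns, I_{n_x} in the x^{j+1} columns, and zeros elsewhere. Then the linear map ℝ^n → ℝ^p induced by M is surjective, i.e. M has full row rank. -/

import Mathlib

/-!
Take all inputs zero. Then `M z` is the residual `x⁰, x¹ - A₀ x⁰, …, xᴺ - A_{N-1} x^{N-1}` of the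
state trajectory stored in `z`, a block lower-triangular system with identity diagonal, so any
right-hand side `y` is reached by simulating `x⁰ = y⁰`, `x^{j+1} = y^{j+1} + A_j x^j` forward.
-/

open Matrix

theorem Fin.sum_ite_castSucc_add_ite_last {α : Type*} [AddCommMonoid α] {N : ℕ}
    (i : Fin (N + 1)) (f : Fin (N + 1) → α) :
    ∑ j : Fin N, (if i = j.castSucc then f j.castSucc else 0)
      + (if i = Fin.last N then f (Fin.last N) else 0) = f i := by
  rw [← Fin.sum_univ_castSucc (fun k => if i = k then f k else 0)]
  simp

theorem Fin.sum_ite_succ {α : Type*} [AddCommMonoid α] {N : ℕ}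
    (i : Fin (N + 1)) (g : Fin N → α) :
    ∑ j : Fin N, (if i = j.succ then g j else 0) = Fin.cases 0 g i := by
  cases i using Fin.cases <;> simp [(Fin.succ_ne_zero _).symm, Fin.succ_inj]

section OptimalControl

variable {N nx nu : ℕ}

def predictedState (A : Fin N → Matrix (Fin nx) (Fin nx) ℝ) (x : Fin (N + 1) → Fin nx → ℝ) :
    Fin (N + 1) → Fin nx → ℝ :=
  Fin.cases 0 fun j => A j *ᵥ x j.castSucc

def forwardSimulate (A : Fin N → Matrix (Fin nx) (Fin nx) ℝ) (y : Fin (N + 1) → Fin nx → ℝ) :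
    Fin (N + 1) → Fin nx → ℝ :=
  Fin.induction (y 0) fun j x => y j.succ + A j *ᵥ x

theorem forwardSimulate_sub_predictedState (A : Fin N → Matrix (Fin nx) (Fin nx) ℝ)
    (y : Fin (N + 1) → Fin nx → ℝ) :
    forwardSimulate A y - predictedState A (forwardSimulate A y) = y := by
  funext i
  cases i using Fin.cases <;> simp [forwardSimulate, predictedState]

def zeroInputVec (nu : ℕ) (x : Fin (N + 1) → Fin nx → ℝ) :
    ((Fin nx ⊕ Fin nu) × Fin N) ⊕ Fin nx → ℝ
  | Sum.inl (Sum.inl s, j) => x j.castSucc s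
  | Sum.inl _ => 0
  | Sum.inr s => x (Fin.last N) s

theorem mulVec_zeroInputVec (A : Fin N → Matrix (Fin nx) (Fin nx) ℝ)
    {M : Matrix (Fin (N + 1) × Fin nx) (((Fin nx ⊕ Fin nu) × Fin N) ⊕ Fin nx) ℝ}
    (hstate : ∀ p s j, M p (Sum.inl (Sum.inl s, j)) =
      (if p.1 = j.castSucc ∧ p.2 = s then 1 else 0) + (if p.1 = j.succ then -(A j p.2 s) else 0))
    (hlast : ∀ p s, M p (Sum.inr s) = if p.1 = Fin.last N ∧ p.2 = s then 1 else 0)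
    (x : Fin (N + 1) → Fin nx → ℝ) :
    M *ᵥ zeroInputVec nu x = fun p => (x - predictedState A x) p.1 p.2 := by
  funext ⟨i, r⟩
  simp only [mulVec, dotProduct, hstate, hlast, ite_and, zeroInputVec,
    Fintype.sum_sum_type, Fintype.sum_prod_type_right, add_mul, ite_mul, one_mul, zero_mul, neg_mul,
    Finset.sum_add_distrib, Finset.sum_ite_irrel, Finset.sum_ite_eq, Finset.mem_univ, ↓reduceIte,
    Finset.sum_const_zero, Finset.sum_neg_distrib, mul_zero, add_zero, Pi.sub_apply]
  rw [add_right_comm, Fin.sum_ite_castSucc_add_ite_last i (fun k => x k r), Fin.sum_ite_succ]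
  cases i using Fin.cases <;> simp [predictedState, mulVec, dotProduct, sub_eq_add_neg]

end OptimalControl

/-- The equality-constraint matrix `M` of the OCP (encoding the initial condition and
the linear dynamics) has full row rank: the induced linear map is surjective. -/
theorem stmt_3 (N nx nu : ℕ)
    (A : Fin N → Matrix (Fin nx) (Fin nx) ℝ)
    (B : Fin N → Matrix (Fin nx) (Fin nu) ℝ)
    -- the constraint matrix M: block row 0 is (I, 0, …, 0); block row j+1 has
    -- −A_j in the x^j columns, −B_j in the u^j columns and I in the x^{j+1} columns.
    (M : Matrix (Fin (N + 1) × Fin nx) (((Fin nx ⊕ Fin nu) × Fin N) ⊕ Fin nx) ℝ)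
    (hM : M = Matrix.of fun p c =>
      match c with
      | Sum.inl (Sum.inl s, j) =>
          (if p.1 = j.castSucc ∧ p.2 = s then (1 : ℝ) else 0)
            + (if p.1 = j.succ then -(A j p.2 s) else 0)
      | Sum.inl (Sum.inr s, j) => if p.1 = j.succ then -(B j p.2 s) else 0
      | Sum.inr s => if p.1 = Fin.last N ∧ p.2 = s then (1 : ℝ) else 0) :
    Function.Surjective M.mulVec := by
  subst hM
  intro y
  refine ⟨zeroInputVec nu (forwardSimulate A (Function.curry y)), ?_⟩
  rw [mulVec_zeroInputVec A (fun _ _ _ => rfl) (fun _ _ => rfl), forwardSimulate_sub_predictedState]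
  rfl
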